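/- arXiv:0905.1528 — 5 statements merged into one kernel-verified Lean document; each statement's English description precedes it below -/
import Mathlib

section
/- Every spindle-convex subset of ℝ³ is strictly convex: if S is spindle-convex, a, b ∈ S with a ≠ b, and y lies in the relative interior of the segment [a,b], then y is in the interior of S relative to the affine hull context, i.e., any point strictly between a and b is a non-extreme point contained in S together with a neighborhood in the spindle sp(a,b). -/
open scoped InnerProductSpace
open Metric

noncomputable section

abbrev E3 : Type := EuclideanSpace ℝ (Fin 3)

/-- `S` is spindle-convex: for any two distinct points `a b ∈ S` and any circle of
radius `r ≥ 1` (center `c`, lying in the plane through `c` with normal `n`) passing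
through `a` and `b`, every point of the (closed) short circular arc with endpoints
`a, b` belongs to `S`.  The short arc is cut off by a hyperplane through the chord
`[a,b]` with in-plane direction `u` pointing towards the short side (`0 ≤ ⟪a-c,u⟫`). -/
def SpindleConvex (S : Set E3) : Prop :=
  ∀ a ∈ S, ∀ b ∈ S, a ≠ b →
    ∀ (c n u : E3) (r : ℝ), 1 ≤ r →
      ‖a - c‖ = r → ‖b - c‖ = r →
      n ≠ 0 → ⟪a - c, n⟫_ℝ = 0 → ⟪b - c, n⟫_ℝ = 0 →
      u ≠ 0 → ⟪u, n⟫_ℝ = 0 → ⟪a - c, u⟫_ℝ = ⟪b - c, u⟫_ℝ → 0 ≤ ⟪a - c, u⟫_ℝ →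
      ∀ p : E3, ‖p - c‖ = r → ⟪p - c, n⟫_ℝ = 0 → ⟪a - c, u⟫_ℝ ≤ ⟪p - c, u⟫_ℝ → p ∈ S

/-!
For `p ≠ q` in `S`, every point `m + ξ e + η w` (with `m` the midpoint, `e` the unit direction of
`q - p`, `w ⊥ e` a unit vector, `η > 0`) lying in the disc of centre `m - w` through `p` and `q`
is on the short arc of a circle of radius `≥ 1` through `p` and `q`, hence in `S`. A point of the
open chord is the lowest point of a circle of radius `≥ 1` through two such points, so it is in `S`
too. Hence `S` contains the ball about `m` of radius `√(1 + |pq|² / 4) - 1`, the largest ball about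
`m` inside that disc. This gives convexity, and, approximating the endpoints of a segment in the
frontier by points of `S`, shows that the midpoint of the segment is an interior point.
-/

section InnerProductSpace

variable {F : Type*} [NormedAddCommGroup F] [InnerProductSpace ℝ F]

theorem norm_smul_add_smul_sq {e w : F} (he : ‖e‖ = 1) (hw : ‖w‖ = 1) (hew : ⟪e, w⟫_ℝ = 0)
    (x y : ℝ) : ‖x • e + y • w‖ ^ 2 = x ^ 2 + y ^ 2 := by
  rw [norm_add_sq_real, norm_smul, norm_smul, real_inner_smul_left, real_inner_smul_right, hew,
    he, hw, Real.norm_eq_abs, Real.norm_eq_abs]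
  ring_nf
  rw [sq_abs, sq_abs]

theorem exists_ne_zero_forall_inner_eq_zero [FiniteDimensional ℝ F] (s : Finset F)
    (hs : s.card < Module.finrank ℝ F) : ∃ n : F, n ≠ 0 ∧ ∀ v ∈ s, ⟪v, n⟫_ℝ = 0 := by
  set K := Submodule.span ℝ (s : Set F)
  have hK : Kᗮ ≠ ⊥ := by
    rw [Ne, ← Submodule.finrank_eq_zero]
    have hsum := K.finrank_add_finrank_orthogonal
    have hKs : Module.finrank ℝ K ≤ s.card := finrank_span_finset_le_card s
    omega
  obtain ⟨n, hnK, hn⟩ := Submodule.exists_mem_ne_zero_of_ne_bot hK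
  exact ⟨n, hn, fun v hv => (Submodule.mem_orthogonal K n).1 hnK v (Submodule.subset_span hv)⟩

theorem exists_norm_eq_one_inner_eq_zero [FiniteDimensional ℝ F]
    (hF : 1 < Module.finrank ℝ F) (v : F) : ∃ w : F, ‖w‖ = 1 ∧ ⟪v, w⟫_ℝ = 0 := by
  obtain ⟨n, hn, hvn⟩ := exists_ne_zero_forall_inner_eq_zero {v} (by simpa using hF)
  refine ⟨‖n‖⁻¹ • n, by simp [norm_smul, hn], by simp [real_inner_smul_right, hvn]⟩

end InnerProductSpace

theorem exists_norm_eq_one_midpoint_sub_smul_eq {F : Type*} [NormedAddCommGroup F]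
    [NormedSpace ℝ F] {p q : F} (hpq : p ≠ q) : ∃ e : F, ‖e‖ = 1 ∧
      midpoint ℝ p q - (dist p q / 2) • e = p ∧ midpoint ℝ p q + (dist p q / 2) • e = q := by
  have hd : ‖q - p‖ ≠ 0 := norm_ne_zero_iff.2 (sub_ne_zero.2 hpq.symm)
  have half : ‖q - p‖ / 2 * ‖q - p‖⁻¹ = 2⁻¹ := by field_simp
  refine ⟨‖q - p‖⁻¹ • (q - p), by simp [norm_smul, hd], ?_, ?_⟩ <;>
  · rw [midpoint_eq_smul_add, invOf_eq_inv, smul_smul, dist_comm, dist_eq_norm, half]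
    module

namespace SpindleConvex

variable {S : Set E3} {e w : E3}

theorem mem_of_mem_circle (hS : SpindleConvex S) (he : ‖e‖ = 1) (hw : ‖w‖ = 1)
    (hew : ⟪e, w⟫_ℝ = 0) {c : E3} {r α β ξ ζ : ℝ} (hr : 1 ≤ r) (hα : α ≠ 0) (hβ : 0 ≤ β)
    (hβζ : β ≤ ζ) (hαβ : α ^ 2 + β ^ 2 = r ^ 2) (hξζ : ξ ^ 2 + ζ ^ 2 = r ^ 2)
    (hp : c + (-α) • e + β • w ∈ S) (hq : c + α • e + β • w ∈ S) :
    c + ξ • e + ζ • w ∈ S := by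
  obtain ⟨n, hn, hn'⟩ :=
    exists_ne_zero_forall_inner_eq_zero {e, w} (Finset.card_le_two.trans_lt (by simp))
  have hen : ⟪e, n⟫_ℝ = 0 := hn' e (by simp)
  have hwn : ⟪w, n⟫_ℝ = 0 := hn' w (by simp)
  have hsub (x y : ℝ) : c + x • e + y • w - c = x • e + y • w := by abel
  have hnorm (x y : ℝ) (h : x ^ 2 + y ^ 2 = r ^ 2) : ‖c + x • e + y • w - c‖ = r := by
    rw [hsub, ← sq_eq_sq₀ (norm_nonneg _) (by linarith), norm_smul_add_smul_sq he hw hew, h]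
  have hinner_n (x y : ℝ) : ⟪c + x • e + y • w - c, n⟫_ℝ = 0 := by
    simp [hsub, inner_add_left, real_inner_smul_left, hen, hwn]
  have hinner_w (x y : ℝ) : ⟪c + x • e + y • w - c, w⟫_ℝ = y := by
    simp [hsub, inner_add_left, real_inner_smul_left, hew, hw]
  have hpq : c + (-α) • e + β • w ≠ c + α • e + β • w := by
    intro h
    have : -α = α := smul_left_injective ℝ (norm_ne_zero_iff.1 (by simp [he]))
      (add_left_cancel (add_right_cancel h))
    exact hα (by linarith)
  refine hS _ hp _ hq hpq c n w r hr (hnorm _ _ (by rwa [neg_sq])) (hnorm _ _ hαβ) hn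
    (hinner_n _ _) (hinner_n _ _) (norm_ne_zero_iff.1 (by simp [hw])) hwn ?_ ?_ _
    (hnorm _ _ hξζ) (hinner_n _ _) ?_ <;> simp only [hinner_w, hβ, hβζ]

/-- The circle through `m ± α • e` and the point has centre `m - k • w` with `k ≥ 1`. -/
theorem add_smul_add_smul_mem (hS : SpindleConvex S) (he : ‖e‖ = 1) (hw : ‖w‖ = 1)
    (hew : ⟪e, w⟫_ℝ = 0) {m : E3} {α ξ η : ℝ} (hα : α ≠ 0) (hη : 0 < η)
    (h : ξ ^ 2 + η ^ 2 + 2 * η ≤ α ^ 2) (hp : m - α • e ∈ S) (hq : m + α • e ∈ S) :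
    m + ξ • e + η • w ∈ S := by
  obtain ⟨k, hk⟩ : ∃ k, 2 * η * k = α ^ 2 - ξ ^ 2 - η ^ 2 :=
    ⟨(α ^ 2 - ξ ^ 2 - η ^ 2) / (2 * η), by field_simp⟩
  have hk1 : 1 ≤ k := by nlinarith
  have hr : 1 ≤ √(α ^ 2 + k ^ 2) := Real.one_le_sqrt.2 (by nlinarith)
  have key := hS.mem_of_mem_circle he hw hew (c := m - k • w) (ξ := ξ) (ζ := η + k) hr hα
    (by linarith) (by linarith) (Real.sq_sqrt (by positivity)).symm
    (by rw [Real.sq_sqrt (by positivity)]; linear_combination hk)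
    (by convert hp using 1; module) (by convert hq using 1; module)
  convert key using 1
  module

/-- `x` is the lowest point of the circle of centre `x + k • w` through `x ± L • e + ε • w`. -/
theorem mem_of_sub_smul_add_smul_mem_of_add_smul_add_smul_mem (hS : SpindleConvex S)
    (he : ‖e‖ = 1) (hw : ‖w‖ = 1) (hew : ⟪e, w⟫_ℝ = 0) {x : E3} {L ε : ℝ} (hε : 0 < ε)
    (hεL : ε ≤ L) (h : 2 * ε ≤ L ^ 2 + ε ^ 2) (hp : x - L • e + ε • w ∈ S)
    (hq : x + L • e + ε • w ∈ S) : x ∈ S := by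
  obtain ⟨k, hk⟩ : ∃ k, 2 * ε * k = L ^ 2 + ε ^ 2 := ⟨(L ^ 2 + ε ^ 2) / (2 * ε), by field_simp⟩
  have hk1 : 1 ≤ k := by nlinarith
  have hεk : ε ≤ k := by nlinarith
  have key := hS.mem_of_mem_circle he (w := -w) (by rwa [norm_neg])
    (by rw [inner_neg_right, hew, neg_zero]) (c := x + k • w) (ξ := 0) (ζ := k) hk1
    (by linarith : L ≠ 0) (by linarith : 0 ≤ k - ε) (by linarith) (by linear_combination -hk)
    (by ring) (by convert hp using 1; module) (by convert hq using 1; module)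
  convert key using 1
  module

theorem add_smul_mem_of_abs_lt (hS : SpindleConvex S) (he : ‖e‖ = 1) {m : E3} {α ξ : ℝ}
    (hξ : |ξ| < α) (hp : m - α • e ∈ S) (hq : m + α • e ∈ S) : m + ξ • e ∈ S := by
  obtain ⟨w, hw, hew⟩ := exists_norm_eq_one_inner_eq_zero (by simp) e
  set L := min 1 ((α - |ξ|) / 2)
  have hL0 : 0 < L := lt_min one_pos (by linarith)
  have hL1 : L ≤ 1 := min_le_left _ _
  have hLα : 2 * L ≤ α - |ξ| := by linarith [min_le_right 1 ((α - |ξ|) / 2)]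
  have hcap (s : ℝ) (hs : |s| ≤ |ξ| + L) : m + s • e + (L ^ 2 / 2) • w ∈ S := by
    have hs2 : s ^ 2 ≤ (|ξ| + L) ^ 2 := by
      rw [← sq_abs]; exact pow_le_pow_left₀ (abs_nonneg s) hs 2
    have hα2 : (|ξ| + 2 * L) ^ 2 ≤ α ^ 2 := pow_le_pow_left₀ (by positivity) (by linarith) 2
    refine hS.add_smul_add_smul_mem he hw hew (by linarith [abs_nonneg ξ]) (by positivity) ?_
      hp hq
    nlinarith [abs_nonneg ξ, mul_le_mul_of_nonneg_left hL1 (sq_nonneg L)]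
  refine hS.mem_of_sub_smul_add_smul_mem_of_add_smul_add_smul_mem he hw hew (L := L)
    (ε := L ^ 2 / 2) (by positivity) (by nlinarith) (by nlinarith) ?_ ?_
  · convert hcap (ξ - L) (by simpa [abs_of_pos hL0] using abs_sub ξ L) using 1; module
  · convert hcap (ξ + L) (by simpa [abs_of_pos hL0] using abs_add_le ξ L) using 1; module

theorem ball_subset (hS : SpindleConvex S) (he : ‖e‖ = 1) {m : E3} {α : ℝ} (hα : 0 ≤ α)
    (hp : m - α • e ∈ S) (hq : m + α • e ∈ S) : ball m (√(1 + α ^ 2) - 1) ⊆ S := by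
  intro x hx
  rw [mem_ball, dist_eq_norm, lt_sub_iff_add_lt, Real.lt_sqrt (by positivity)] at hx
  set ξ := ⟪x - m, e⟫_ℝ
  set v := x - m - ξ • e
  have hve : ⟪v, e⟫_ℝ = 0 := by
    simp [v, ξ, inner_sub_left, real_inner_smul_left, he]
  have hxv : x = m + ξ • e + v := by simp only [v]; abel
  have hpyth : ‖x - m‖ ^ 2 = ξ ^ 2 + ‖v‖ ^ 2 := by
    rw [show x - m = ξ • e + v by rw [hxv]; abel, norm_add_sq_real, norm_smul,
      real_inner_smul_left, real_inner_comm, hve, he, Real.norm_eq_abs, mul_one, sq_abs]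
    ring
  rcases eq_or_ne v 0 with hv | hv
  · rw [hxv, hv, add_zero]
    have hξ : |ξ| < α := abs_lt_of_sq_lt_sq (by nlinarith [norm_nonneg (x - m)]) hα
    exact hS.add_smul_mem_of_abs_lt he hξ hp hq
  · have hη : 0 < ‖v‖ := norm_pos_iff.2 hv
    have hvx : ‖v‖ ≤ ‖x - m‖ := by nlinarith [norm_nonneg (x - m)]
    have key := hS.add_smul_add_smul_mem he (w := ‖v‖⁻¹ • v) (by simp [norm_smul, hv])
      (by rw [real_inner_smul_right, real_inner_comm, hve, mul_zero]) (α := α) (ξ := ξ)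
      (by rintro rfl; nlinarith) hη (by nlinarith) hp hq
    rwa [smul_smul, mul_inv_cancel₀ hη.ne', one_smul, ← hxv] at key

theorem ball_midpoint_subset (hS : SpindleConvex S) {p q : E3} (hp : p ∈ S) (hq : q ∈ S) :
    ball (midpoint ℝ p q) (√(1 + (dist p q / 2) ^ 2) - 1) ⊆ S := by
  rcases eq_or_ne p q with rfl | hpq
  · simp
  obtain ⟨e, he, hpe, hqe⟩ := exists_norm_eq_one_midpoint_sub_smul_eq hpq
  exact hS.ball_subset he (by positivity) (by rwa [hpe]) (by rwa [hqe])

theorem convex (hS : SpindleConvex S) : Convex ℝ S := by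
  refine convex_iff_openSegment_subset.2 fun p hp q hq => ?_
  rcases eq_or_ne p q with rfl | hpq
  · simpa using hp
  obtain ⟨e, he, hpe, hqe⟩ := exists_norm_eq_one_midpoint_sub_smul_eq hpq
  have hα : 0 < dist p q / 2 := half_pos (dist_pos.2 hpq)
  generalize midpoint ℝ p q = m, dist p q / 2 = α at hα hpe hqe
  subst hpe hqe
  rw [openSegment_eq_image_lineMap]
  rintro _ ⟨θ, ⟨hθ0, hθ1⟩, rfl⟩
  have hline : AffineMap.lineMap (m - α • e) (m + α • e) θ = m + ((2 * θ - 1) * α) • e := by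
    rw [AffineMap.lineMap_apply_module]; module
  rw [hline]
  exact hS.add_smul_mem_of_abs_lt he (abs_lt.2 ⟨by nlinarith, by nlinarith⟩) hp hq

theorem midpoint_mem_interior (hS : SpindleConvex S) {a b : E3} (ha : a ∈ closure S)
    (hb : b ∈ closure S) (hab : a ≠ b) : midpoint ℝ a b ∈ interior S := by
  set U : Set (E3 × E3) :=
    {z | dist (midpoint ℝ a b) (midpoint ℝ z.1 z.2) < √(1 + (dist z.1 z.2 / 2) ^ 2) - 1}
  have hmid : Continuous fun z : E3 × E3 => midpoint ℝ z.1 z.2 :=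
    continuous_fst.lineMap continuous_snd continuous_const
  have hU : IsOpen U := isOpen_lt (continuous_const.dist hmid) (by fun_prop)
  have habU : (a, b) ∈ U := by
    simp only [U, Set.mem_ofPred_eq, dist_self, sub_pos, Real.lt_sqrt zero_le_one]
    have := dist_pos.2 hab
    nlinarith
  have hab' : (a, b) ∈ closure (S ×ˢ S) := by
    rw [closure_prod_eq]; exact ⟨ha, hb⟩
  obtain ⟨⟨p, q⟩, hpq, hp, hq⟩ := _root_.mem_closure_iff.1 hab' U hU habU
  exact interior_maximal (hS.ball_midpoint_subset hp hq) isOpen_ball hpq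

end SpindleConvex

/-- A spindle-convex subset of ℝ³ is strictly convex: it is convex and its boundary
contains no nondegenerate segment. -/
theorem spindleConvex_strictlyConvex (S : Set E3) (h : SpindleConvex S) :
    Convex ℝ S ∧ ∀ a b : E3, a ≠ b → ¬ (segment ℝ a b ⊆ frontier S) := by
  refine ⟨h.convex, fun a b hab hsub => ?_⟩
  have hclosure (x : E3) (hx : x ∈ segment ℝ a b) : x ∈ closure S :=
    frontier_subset_closure (hsub hx)
  exact (hsub (midpoint_mem_segment a b)).2 <| h.midpoint_mem_interior
    (hclosure a (left_mem_segment ℝ a b)) (hclosure b (right_mem_segment ℝ a b)) hab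
end
end

section
/- Simplified Sallee Lemma: Let B be a closed unit ball in ℝ³ centered at z, let a, b ∈ B be distinct, let C be a circle of radius r ≥ 1 with center c passing through a and b, and let A be an open short circular arc of C with endpoints a, b. Then A ⊆ int B, unless a, b ∈ ∂B and r = 1, in which case c = z and C ⊆ ∂B. -/
open scoped InnerProductSpace
open Metric

noncomputable section

/-!
Put `w = z - c` and `M = (r ^ 2 + ‖w‖ ^ 2 - 1) / 2`. For `x` on the circle,
`‖x - z‖ ^ 2 = 1 + 2 (M - ⟪x - c, w⟫)`, so on the circle the ball is the half-space
`⟪x - c, w⟫ ≥ M`. If `M ≤ 0`, then `r ≥ 1` forces `w = 0` and `r = 1`. If `M > 0`, the endpoints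
are not antipodal, and every point `p` of the open short arc lies strictly beyond the chord:
`p - c = λ (a - c) + μ (b - c)` with `λ, μ > 0` and `λ + μ > 1`. Hence
`⟪p - c, w⟫ ≥ (λ + μ) M > M`.
-/

open Module

theorem Submodule.exists_smul_add_smul_eq_of_finrank_eq_two {K W : Type*} [Field K]
    [AddCommGroup W] [Module K W] {P : Submodule K W} (hP : finrank K P = 2) {s d v : W}
    (hsd : LinearIndependent K ![s, d]) (hs : s ∈ P) (hd : d ∈ P) (hv : v ∈ P) :
    ∃ x y : K, x • s + y • d = v := by
  have : FiniteDimensional K P := .of_finrank_pos (by omega)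
  have hspan : span K {s, d} = P := by
    apply eq_of_le_of_finrank_eq (span_le.mpr (Set.insert_subset_iff.mpr ⟨hs, by simpa⟩))
    rw [hP, ← Matrix.range_cons_cons_empty, finrank_span_eq_card hsd, Fintype.card_fin]
  exact mem_span_pair.mp (hspan ▸ hv)

section ChordFrame

variable {V : Type*} [NormedAddCommGroup V] [InnerProductSpace ℝ V] {α β : V}

theorem real_inner_self_add_eq_half_norm_sq (h : ‖α‖ = ‖β‖) :
    ⟪α, α + β⟫_ℝ = ‖α + β‖ ^ 2 / 2 := by
  rw [inner_add_right, real_inner_self_eq_norm_sq, norm_add_sq_real, ← h]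
  ring

theorem linearIndependent_add_sub_of_norm_eq (h : ‖α‖ = ‖β‖) (hadd : α + β ≠ 0) (hsub : α ≠ β) :
    LinearIndependent ℝ ![α + β, α - β] := by
  refine linearIndependent_of_ne_zero_of_inner_eq_zero
    (by simp [Fin.forall_fin_two, hadd, sub_ne_zero.mpr hsub]) ?_
  have hsd := (real_inner_add_sub_eq_zero_iff α β).mpr h
  intro i j hij
  fin_cases i <;> fin_cases j <;> simp_all [real_inner_comm]

/-- In the orthogonal frame `α + β, α - β`, a point of the circle through `α`, `β` lying beyond
the chord's midpoint is inside the angle `α 0 β`. -/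
theorem abs_lt_of_norm_smul_add_add_smul_sub_eq (h : ‖α‖ = ‖β‖) (hsub : α ≠ β) {x y : ℝ}
    (hq : ‖x • (α + β) + y • (α - β)‖ = ‖α‖) (hx : 1 / 2 < x) : |y| < x := by
  have hsd := (real_inner_add_sub_eq_zero_iff α β).mpr h
  have hD0 : 0 < ‖α - β‖ ^ 2 := pow_pos (norm_pos_iff.mpr (sub_ne_zero.mpr hsub)) 2
  have hpar : ‖α + β‖ ^ 2 + ‖α - β‖ ^ 2 = 4 * ‖α‖ ^ 2 := by
    rw [norm_add_sq_real, norm_sub_sq_real, ← h]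
    ring
  have hcirc : x ^ 2 * ‖α + β‖ ^ 2 + y ^ 2 * ‖α - β‖ ^ 2 = ‖α‖ ^ 2 := by
    rw [← hq, norm_add_sq_real (x • _), real_inner_smul_left, real_inner_smul_right, hsd, norm_smul,
      norm_smul, mul_pow, mul_pow, Real.norm_eq_abs, Real.norm_eq_abs, sq_abs, sq_abs]
    ring
  have hy : (4 * y ^ 2) * ‖α - β‖ ^ 2 ≤ 1 * ‖α - β‖ ^ 2 := by
    have hx2 : 0 ≤ 4 * x ^ 2 - 1 := by nlinarith
    nlinarith [mul_nonneg hx2 (sq_nonneg ‖α + β‖)]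
  rw [abs_lt]
  constructor <;> nlinarith [le_of_mul_le_mul_right hy hD0]

theorem exists_pos_smul_add_eq_of_inner_eq {P : Submodule ℝ V} (hP : finrank ℝ P = 2)
    (hα : α ∈ P) (hβ : β ∈ P) (h : ‖α‖ = ‖β‖) (hadd : α + β ≠ 0) (hsub : α ≠ β) {u : V}
    (hu : u ∈ P) (hu0 : u ≠ 0) (huαβ : ⟪α, u⟫_ℝ = ⟪β, u⟫_ℝ) (hshort : 0 ≤ ⟪α, u⟫_ℝ) :
    ∃ k : ℝ, 0 < k ∧ k • (α + β) = u := by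
  have hsd := (real_inner_add_sub_eq_zero_iff α β).mpr h
  obtain ⟨k, l, rfl⟩ := Submodule.exists_smul_add_smul_eq_of_finrank_eq_two hP
    (linearIndependent_add_sub_of_norm_eq h hadd hsub) (P.add_mem hα hβ) (P.sub_mem hα hβ) hu
  have hl : l = 0 := by
    have hd : ⟪α - β, k • (α + β) + l • (α - β)⟫_ℝ = 0 := by
      rw [inner_sub_left, huαβ, sub_self]
    rw [inner_add_right, real_inner_smul_right, real_inner_smul_right, real_inner_comm, hsd,
      real_inner_self_eq_norm_sq, mul_zero, zero_add] at hd
    exact (mul_eq_zero.mp hd).resolve_right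
      (pow_ne_zero 2 (norm_ne_zero_iff.mpr (sub_ne_zero.mpr hsub)))
  subst hl
  rw [zero_smul, add_zero] at hu0 hshort ⊢
  rw [real_inner_smul_right, real_inner_self_add_eq_half_norm_sq h] at hshort
  have hk0 : k ≠ 0 := by rintro rfl; simp at hu0
  have hS0 : 0 < ‖α + β‖ ^ 2 / 2 := by positivity
  exact ⟨k, lt_of_le_of_ne (nonneg_of_mul_nonneg_left hshort hS0) hk0.symm, rfl⟩

theorem exists_pos_smul_add_pos_smul_eq_of_short_arc {P : Submodule ℝ V} (hP : finrank ℝ P = 2)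
    (hα : α ∈ P) (hβ : β ∈ P) (h : ‖α‖ = ‖β‖) (hadd : α + β ≠ 0) (hsub : α ≠ β) {q u : V}
    (hq : q ∈ P) (hu : u ∈ P) (hαq : ‖α‖ = ‖q‖) (hu0 : u ≠ 0) (huαβ : ⟪α, u⟫_ℝ = ⟪β, u⟫_ℝ)
    (hshort : 0 ≤ ⟪α, u⟫_ℝ) (hqu : ⟪α, u⟫_ℝ < ⟪q, u⟫_ℝ) :
    ∃ l m : ℝ, 0 < l ∧ 0 < m ∧ 1 < l + m ∧ l • α + m • β = q := by
  obtain ⟨k, hk, rfl⟩ :=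
    exists_pos_smul_add_eq_of_inner_eq hP hα hβ h hadd hsub hu hu0 huαβ hshort
  obtain ⟨x, y, rfl⟩ := Submodule.exists_smul_add_smul_eq_of_finrank_eq_two hP
    (linearIndependent_add_sub_of_norm_eq h hadd hsub) (P.add_mem hα hβ) (P.sub_mem hα hβ) hq
  have hx : 1 / 2 < x := by
    have hds : ⟪α - β, α + β⟫_ℝ = 0 := by
      rw [real_inner_comm, (real_inner_add_sub_eq_zero_iff α β).mpr h]
    rw [real_inner_smul_right, real_inner_self_add_eq_half_norm_sq h, inner_add_left,
      real_inner_smul_left, real_inner_smul_left, real_inner_smul_right, real_inner_smul_right,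
      real_inner_self_eq_norm_sq, hds] at hqu
    have hkS : 0 < k * ‖α + β‖ ^ 2 := by positivity
    nlinarith
  obtain ⟨hy₁, hy₂⟩ := abs_lt.mp (abs_lt_of_norm_smul_add_add_smul_sub_eq h hsub hαq.symm hx)
  exact ⟨x + y, x - y, by linarith, by linarith, by linarith, by module⟩

end ChordFrame

/-- Simplified Sallee Lemma.  Let `B` be the closed unit ball centered at `z`, let
`a ≠ b` be points of `B`, and let `C` be the circle of radius `r ≥ 1` centered at `c`
lying in the plane through `c` with normal `n` and passing through `a` and `b`.
Let `A` be an open short circular arc of `C` with endpoints `a, b`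
(cut off strictly by a hyperplane through the chord `[a,b]` with in-plane direction `u`
pointing to the short side).  Then `A ⊆ int B`, with one exception: if
`a, b ∈ ∂B` and `r = 1`, then `c = z` and `C ⊆ ∂B`. -/
theorem simplified_sallee (z a b c n u : E3) (r : ℝ)
    (hab : a ≠ b) (ha : ‖a - z‖ ≤ 1) (hb : ‖b - z‖ ≤ 1)
    (hr : 1 ≤ r) (hac : ‖a - c‖ = r) (hbc : ‖b - c‖ = r)
    (hn : n ≠ 0) (han : ⟪a - c, n⟫_ℝ = 0) (hbn : ⟪b - c, n⟫_ℝ = 0)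
    (hu : u ≠ 0) (hun : ⟪u, n⟫_ℝ = 0)
    (huab : ⟪a - c, u⟫_ℝ = ⟪b - c, u⟫_ℝ) (hshort : 0 ≤ ⟪a - c, u⟫_ℝ) :
    (∀ p : E3, ‖p - c‖ = r → ⟪p - c, n⟫_ℝ = 0 → ⟪a - c, u⟫_ℝ < ⟪p - c, u⟫_ℝ →
        ‖p - z‖ < 1)
    ∨ (‖a - z‖ = 1 ∧ ‖b - z‖ = 1 ∧ r = 1 ∧ c = z ∧
        ∀ p : E3, ‖p - c‖ = r → ⟪p - c, n⟫_ℝ = 0 → ‖p - z‖ = 1) := by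
  set M := (r ^ 2 + ‖z - c‖ ^ 2 - 1) / 2 with hM_def
  have hsq : ∀ x : E3, ‖x - c‖ = r → ‖x - z‖ ^ 2 = 1 + 2 * (M - ⟪x - c, z - c⟫_ℝ) := by
    intro x hx
    rw [← sub_sub_sub_cancel_right x z c, norm_sub_sq_real, hx]
    ring
  rcases le_or_gt M 0 with hM | hM
  · right
    rw [hM_def] at hM
    have hcz : c = z := by
      rw [eq_comm, ← sub_eq_zero, ← norm_eq_zero]
      nlinarith [norm_nonneg (z - c)]
    have hr1 : r = 1 := by nlinarith [norm_nonneg (z - c)]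
    subst hcz hr1
    exact ⟨hac, hbc, rfl, rfl, fun p hp _ => hp⟩
  · left
    intro p hp hpn hpu
    have haw : M ≤ ⟪a - c, z - c⟫_ℝ := by
      nlinarith [hsq a hac, (sq_le_one_iff₀ (norm_nonneg _)).mpr ha]
    have hbw : M ≤ ⟪b - c, z - c⟫_ℝ := by
      nlinarith [hsq b hbc, (sq_le_one_iff₀ (norm_nonneg _)).mpr hb]
    have hP : finrank ℝ (ℝ ∙ n)ᗮ = 2 := by
      have : Fact (finrank ℝ E3 = 2 + 1) := ⟨finrank_euclideanSpace_fin⟩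
      exact Submodule.finrank_orthogonal_span_singleton hn
    have hnot_antipodal : (a - c) + (b - c) ≠ 0 := by
      intro h
      have := congrArg (⟪·, z - c⟫_ℝ) h
      simp only [inner_add_left, inner_zero_left] at this
      linarith
    obtain ⟨l, m, hl, hm, hlm, hp_eq⟩ := exists_pos_smul_add_pos_smul_eq_of_short_arc hP
      (Submodule.mem_orthogonal_singleton_iff_inner_left.mpr han)
      (Submodule.mem_orthogonal_singleton_iff_inner_left.mpr hbn)
      (hac.trans hbc.symm) hnot_antipodal (sub_left_injective.ne hab)
      (Submodule.mem_orthogonal_singleton_iff_inner_left.mpr hpn)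
      (Submodule.mem_orthogonal_singleton_iff_inner_left.mpr hun)
      (hac.trans hp.symm) hu huab hshort hpu
    have hpw : M < ⟪p - c, z - c⟫_ℝ := by
      rw [← hp_eq, inner_add_left, real_inner_smul_left, real_inner_smul_left]
      nlinarith
    rw [← sq_lt_one_iff₀ (norm_nonneg _), hsq p hp]
    linarith
end
end

section
/- A point v of a finite set V ⊆ ℝ³ with circumradius < 1 is essential (i.e., 𝓑(V) ⊊ 𝓑(V \ {v})) if and only if there exists x ∈ ℝ³ with ‖x − v‖ = 1 and ‖x − w‖ < 1 for all w ∈ V \ {v}. -/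
/-!
If `y` lies in the unit balls around `V \ {v}` but outside the one around `v`, slide it
towards the circumcentre `c`, which lies in every open unit ball around `V`: by continuity
the path meets the unit sphere about `v`, and by convexity it stays inside the open balls
around the other points. Conversely, `⋂ w ∈ V \ {v}, ball w 1` is open because `V` is finite,
so it contains, together with a point of the sphere about `v`, a point outside that sphere.
-/

open scoped InnerProductSpace
open Metric

noncomputable section

/-- The ball set of `V`: the set of all `y` within distance `1` of every point of `V`,
i.e. the intersection of all closed unit balls centered at points of `V`. -/
def ballSet (V : Set E3) : Set E3 := {y | ∀ x ∈ V, ‖x - y‖ ≤ 1}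

section NormedSpace

variable {E : Type*} [NormedAddCommGroup E] [NormedSpace ℝ E]

theorem exists_add_smul_sub_dist_eq {x c v : E} {r : ℝ} (hc : dist c v ≤ r)
    (hx : r < dist x v) : ∃ s ∈ Set.Ioc (0 : ℝ) 1, dist (x + s • (c - x)) v = r := by
  have hcont : ContinuousOn (fun s : ℝ => dist (x + s • (c - x)) v) (Set.Icc 0 1) := by
    fun_prop
  have hr : r ∈ Set.Ico (dist (x + (1 : ℝ) • (c - x)) v) (dist (x + (0 : ℝ) • (c - x)) v) := by
    simpa using And.intro hc hx
  exact intermediate_value_Ioc' zero_le_one hcont hr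

theorem add_smul_sub_mem_ball {x c w : E} {r s : ℝ} (hx : x ∈ closedBall w r)
    (hc : c ∈ ball w r) (hs : s ∈ Set.Ioc (0 : ℝ) 1) : x + s • (c - x) ∈ ball w r := by
  have hr : r ≠ 0 := (pos_of_mem_ball hc).ne'
  have hint : interior (ball w r) = ball w r := isOpen_ball.interior_eq
  simpa only [hint] using (convex_ball w r).add_smul_sub_mem_interior'
    (closure_ball w hr ▸ hx) (hint.symm ▸ hc) hs

theorem exists_mem_lt_dist_of_mem_sphere {U : Set E} (hU : IsOpen U) {x v : E} {r : ℝ}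
    (hr : r ≠ 0) (hxU : x ∈ U) (hxv : x ∈ sphere v r) : ∃ y ∈ U, r < dist y v := by
  rw [← frontier_closedBall v hr, frontier_eq_closure_inter_closure] at hxv
  obtain ⟨y, hyU, hyv⟩ := mem_closure_iff.1 hxv.2 U hU hxU
  exact ⟨y, hyU, not_le.1 hyv⟩

end NormedSpace

theorem mem_ballSet_iff {V : Set E3} {y : E3} : y ∈ ballSet V ↔ ∀ u ∈ V, dist y u ≤ 1 := by
  simp only [ballSet, Set.mem_ofPred_eq, dist_eq_norm, norm_sub_rev]

theorem ballSet_eq_inter_closedBall {V : Set E3} {v : E3} (hv : v ∈ V) :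
    ballSet V = ballSet (V \ {v}) ∩ closedBall v 1 := by
  ext y
  simp only [Set.mem_inter_iff, mem_ballSet_iff, mem_closedBall]
  constructor
  · exact fun h => ⟨fun u hu => h u hu.1, h v hv⟩
  · rintro ⟨h, hyv⟩ u hu
    by_cases huv : u = v
    · exact huv ▸ hyv
    · exact h u ⟨hu, huv⟩

theorem ballSet_ssubset_diff_iff {V : Set E3} {v : E3} (hv : v ∈ V) :
    ballSet V ⊂ ballSet (V \ {v}) ↔ ∃ y ∈ ballSet (V \ {v}), 1 < dist y v := by
  simp [ballSet_eq_inter_closedBall hv, Set.inter_ssubset_left_iff, Set.not_subset]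

/-- A point v of a finite set V with circumradius < 1 is essential
(𝓑(V) ⊊ 𝓑(V \ {v})) iff there is x with ‖x - v‖ = 1 and ‖x - w‖ < 1 for all
w ∈ V \ {v}. -/
theorem essential_iff (V : Set E3) (hfin : V.Finite)
    (hcr : ∃ (c : E3) (ρ : ℝ), ρ < 1 ∧ V ⊆ Metric.closedBall c ρ)
    (v : E3) (hv : v ∈ V) :
    ballSet V ⊂ ballSet (V \ {v}) ↔
      ∃ x : E3, ‖x - v‖ = 1 ∧ ∀ w ∈ V \ {v}, ‖x - w‖ < 1 := by
  simp only [ballSet_ssubset_diff_iff hv, ← dist_eq_norm]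
  constructor
  · rintro ⟨y, hy, hyv⟩
    obtain ⟨c, ρ, hρ, hVc⟩ := hcr
    have hc : ∀ u ∈ V, c ∈ ball u 1 := fun u hu =>
      mem_ball_comm.1 ((mem_closedBall.1 (hVc hu)).trans_lt hρ)
    obtain ⟨s, hs, hsv⟩ := exists_add_smul_sub_dist_eq (mem_ball.1 (hc v hv)).le hyv
    exact ⟨_, hsv, fun w hw =>
      add_smul_sub_mem_ball (mem_ballSet_iff.1 hy w hw) (hc w hw.1) hs⟩
  · rintro ⟨x, hxv, hxw⟩
    obtain ⟨y, hyU, hyv⟩ := exists_mem_lt_dist_of_mem_sphere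
      (hfin.sdiff.isOpen_biInter fun w _ => isOpen_ball) one_ne_zero
      (Set.mem_iInter₂.2 hxw) hxv
    exact ⟨y, mem_ballSet_iff.2 fun w hw => (Set.mem_iInter₂.1 hyU w hw).le, hyv⟩
end
end

section
/- If V ⊆ ℝ³ is finite with circumradius < 1 and v, v′ ∈ V are both inessential in V, then v′ is inessential in V \ {v}. Consequently 𝓑(V) = 𝓑(ess(V)), where ess(V) is the set of essential points of V. -/
open scoped InnerProductSpace
open Metric

noncomputable section

/-- v is essential in V if removing it strictly enlarges the ball set. -/
def Essential (V : Set E3) (v : E3) : Prop := ballSet V ≠ ballSet (V \ {v})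

/-!
Suppose `v, v'` are inessential in `V` but `v'` is essential in `V \ {v}`: some `y` lies within
distance `1` of all points of `V` except `v, v'`, and farther than `1` from `v'`. Sliding `y`
towards the centre `c` of a ball of radius `ρ < 1` containing `V` gives a point `z` with
`‖v' - z‖ = 1` and at distance `≤ r < 1` from the other points; as `v` is inessential,
`‖v - z‖ ≤ 1`. Pushing `z` a little in the direction `v - v'` keeps it within distance `1` of `v`
(convexity of the ball) and of the other points (slack `1 - r`), but strictly beyond distance `1`
from `v'` (Cauchy–Schwarz), contradicting the inessentiality of `v'` in `V`.

Removing inessential points one at a time then gives `𝓑(V) = 𝓑(ess V)`.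
-/

section Geometry

variable {F : Type*}

theorem norm_sub_add_smul_sub_le [SeminormedAddCommGroup F] [NormedSpace ℝ F] (x y c : F) {t : ℝ}
    (ht₀ : 0 ≤ t) (ht₁ : t ≤ 1) :
    ‖x - (y + t • (c - y))‖ ≤ (1 - t) * ‖x - y‖ + t * ‖x - c‖ := by
  rw [show x - (y + t • (c - y)) = (1 - t) • (x - y) + t • (x - c) by module]
  simpa only [smul_eq_mul] using (convexOn_univ_norm (E := F)).2 (Set.mem_univ (x - y))
    (Set.mem_univ (x - c)) (sub_nonneg.2 ht₁) ht₀ (sub_add_cancel 1 t)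

theorem exists_norm_sub_eq_one_of_subset_closedBall [SeminormedAddCommGroup F] [NormedSpace ℝ F]
    {S : Set F} {c y v' : F} {ρ : ℝ} (hρ : ρ < 1) (hS : S ⊆ closedBall c ρ)
    (hv' : v' ∈ closedBall c ρ) (hy : ∀ x ∈ S, ‖x - y‖ ≤ 1) (hv'y : 1 < ‖v' - y‖) :
    ∃ z r, r < 1 ∧ (∀ x ∈ S, ‖x - z‖ ≤ r) ∧ ‖v' - z‖ = 1 := by
  have hcont : Continuous fun t : ℝ => ‖v' - (y + t • (c - y))‖ := by fun_prop
  have hv'c : ‖v' - c‖ < 1 := (mem_closedBall_iff_norm.1 hv').trans_lt hρ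
  obtain ⟨t, ⟨ht₀, ht₁⟩, ht⟩ : ∃ t ∈ Set.Icc (0 : ℝ) 1, ‖v' - (y + t • (c - y))‖ = 1 :=
    intermediate_value_Icc' zero_le_one hcont.continuousOn
      ⟨by simpa using hv'c.le, by simpa using hv'y.le⟩
  have ht₀ : 0 < t := ht₀.lt_of_ne <| by rintro rfl; rw [zero_smul, add_zero] at ht; linarith
  refine ⟨y + t • (c - y), 1 - t + t * ρ, by nlinarith, fun x hx => ?_, ht⟩
  calc ‖x - (y + t • (c - y))‖ ≤ (1 - t) * ‖x - y‖ + t * ‖x - c‖ :=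
        norm_sub_add_smul_sub_le x y c ht₀.le ht₁
    _ ≤ (1 - t) * 1 + t * ρ :=
        add_le_add (mul_le_mul_of_nonneg_left (hy x hx) (sub_nonneg.2 ht₁))
          (mul_le_mul_of_nonneg_left (mem_closedBall_iff_norm.1 (hS hx)) ht₀.le)
    _ = 1 - t + t * ρ := by ring

theorem one_lt_norm_add_smul_sub [NormedAddCommGroup F] [InnerProductSpace ℝ F] {a b : F}
    (ha : ‖a‖ ≤ 1) (hb : ‖b‖ = 1) (hab : a ≠ b) {ε : ℝ} (hε : 0 < ε) :
    1 < ‖b + ε • (b - a)‖ := by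
  have hinner : 0 ≤ ⟪b, b - a⟫_ℝ := by
    have := real_inner_le_norm b a
    rw [inner_sub_right, real_inner_self_eq_norm_sq, hb] at *
    linarith
  have hd : 0 < ‖b - a‖ := norm_pos_iff.2 (sub_ne_zero.2 hab.symm)
  have hsq : ‖b + ε • (b - a)‖ ^ 2 = 1 + 2 * ε * ⟪b, b - a⟫_ℝ + (ε * ‖b - a‖) ^ 2 := by
    rw [norm_add_sq_real, real_inner_smul_right, norm_smul, Real.norm_of_nonneg hε.le, hb]
    ring
  rw [← one_lt_sq_iff₀ (norm_nonneg _), hsq]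
  linarith [mul_nonneg hε.le hinner, pow_pos (mul_pos hε hd) 2]

theorem exists_forall_norm_sub_le_one_and_one_lt_norm_sub [NormedAddCommGroup F]
    [InnerProductSpace ℝ F] {S : Set F} {z v v' : F} {r : ℝ} (hr : r < 1) (hS : ∀ x ∈ S, ‖x - z‖ ≤ r) (hv : ‖v - z‖ ≤ 1)
    (hv' : ‖v' - z‖ = 1) (hne : v ≠ v') :
    ∃ w, (∀ x ∈ S, ‖x - w‖ ≤ 1) ∧ ‖v - w‖ ≤ 1 ∧ 1 < ‖v' - w‖ := by
  have hd : 0 < ‖v' - v‖ := norm_pos_iff.2 (sub_ne_zero.2 hne.symm)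
  set ε := min 1 ((1 - r) / ‖v' - v‖)
  have hε₀ : 0 < ε := lt_min one_pos (div_pos (by linarith) hd)
  have hεd : ε * ‖v' - v‖ ≤ 1 - r :=
    (le_div_iff₀ hd).1 (min_le_right _ _)
  have hsub : (v' - z) - (v - z) = v' - v := by abel
  refine ⟨z - ε • (v' - v), fun x hx => ?_, ?_, ?_⟩
  · calc ‖x - (z - ε • (v' - v))‖ = ‖(x - z) + ε • (v' - v)‖ := by congr 1; abel
      _ ≤ r + ε * ‖v' - v‖ := by
          grw [norm_add_le, norm_smul, Real.norm_of_nonneg hε₀.le, hS x hx]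
      _ ≤ 1 := by linarith
  · have := (convex_closedBall (0 : F) 1).add_smul_sub_mem (x := v - z) (y := v' - z)
      (by simpa using hv) (by simp [hv']) ⟨hε₀.le, min_le_left _ _⟩
    rwa [hsub, mem_closedBall_zero_iff, ← add_sub_right_comm, ← sub_sub_eq_add_sub] at this
  · have := one_lt_norm_add_smul_sub hv hv' (sub_left_injective.ne hne) hε₀
    rwa [hsub, ← add_sub_right_comm, ← sub_sub_eq_add_sub] at this

end Geometry

theorem ballSet_anti {s t : Set E3} (h : s ⊆ t) : ballSet t ⊆ ballSet s :=
  fun _ hy x hx => hy x (h hx)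

theorem mem_ballSet_of_mem_sdiff_singleton {V : Set E3} {u y : E3} (hy : y ∈ ballSet (V \ {u}))
    (hu : ‖u - y‖ ≤ 1) : y ∈ ballSet V := by
  intro x hx
  rcases eq_or_ne x u with rfl | hxu
  · exact hu
  · exact hy x ⟨hx, hxu⟩

theorem not_essential_iff {V : Set E3} {v : E3} (hv : v ∈ V) :
    ¬ Essential V v ↔ ∀ y ∈ ballSet (V \ {v}), ‖v - y‖ ≤ 1 := by
  rw [Essential, not_ne_iff]
  refine ⟨fun h y hy => (h ▸ hy : y ∈ ballSet V) v hv, fun h => ?_⟩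
  exact (ballSet_anti Set.sdiff_subset).antisymm
    fun y hy => mem_ballSet_of_mem_sdiff_singleton hy (h y hy)

theorem not_essential_sdiff_of_not_essential {V : Set E3} {c : E3} {ρ : ℝ} (hρ : ρ < 1)
    (hV : V ⊆ closedBall c ρ) {v v' : E3} (hv : v ∈ V) (hv' : v' ∈ V) (hne : v ≠ v')
    (hvV : ¬ Essential V v) (hv'V : ¬ Essential V v') : ¬ Essential (V \ {v}) v' := by
  rw [not_essential_iff (show v' ∈ V \ {v} from ⟨hv', hne.symm⟩)]
  intro y hy
  by_contra! hv'y
  obtain ⟨z, r, hr, hz, hv'z⟩ := exists_norm_sub_eq_one_of_subset_closedBall hρ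
    (Set.sdiff_subset.trans <| Set.sdiff_subset.trans hV) (hV hv') hy hv'y
  have hvz : ‖v - z‖ ≤ 1 := (not_essential_iff hv).1 hvV z
    (mem_ballSet_of_mem_sdiff_singleton (fun x hx => (hz x hx).trans hr.le) hv'z.le)
  obtain ⟨w, hw, hvw, hv'w⟩ :=
    exists_forall_norm_sub_le_one_and_one_lt_norm_sub hr hz hvz hv'z hne
  have hwV : w ∈ ballSet (V \ {v'}) :=
    mem_ballSet_of_mem_sdiff_singleton (by rwa [Set.sdiff_sdiff_comm]) hvw
  exact hv'w.not_ge ((not_essential_iff hv').1 hv'V w hwV)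

theorem ballSet_eq_ballSet_essential {V : Set E3} (hfin : V.Finite) {c : E3} {ρ : ℝ}
    (hρ : ρ < 1) (hV : V ⊆ closedBall c ρ) :
    ballSet V = ballSet {v | v ∈ V ∧ Essential V v} := by
  by_cases hall : ∀ v ∈ V, Essential V v
  · congr
    exact (Set.sep_eq_self_iff_mem_true.2 hall).symm
  push Not at hall
  obtain ⟨v, hv, hvV⟩ := hall
  have hess : {w | w ∈ V \ {v} ∧ Essential (V \ {v}) w} ⊆ {w | w ∈ V ∧ Essential V w} :=
    fun w ⟨⟨hwV, hwv⟩, hw⟩ => ⟨hwV, of_not_not fun hwV' =>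
      not_essential_sdiff_of_not_essential hρ hV hv hwV (Ne.symm hwv) hvV hwV' hw⟩
  have hrec :=
    ballSet_eq_ballSet_essential (V := V \ {v}) hfin.sdiff hρ (Set.sdiff_subset.trans hV)
  refine (ballSet_anti fun _ h => h.1).antisymm ?_
  calc ballSet {w | w ∈ V ∧ Essential V w}
      ⊆ ballSet {w | w ∈ V \ {v} ∧ Essential (V \ {v}) w} := ballSet_anti hess
    _ = ballSet (V \ {v}) := hrec.symm
    _ = ballSet V := (not_ne_iff.1 hvV).symm
termination_by V.ncard
decreasing_by exact Set.ncard_sdiff_singleton_lt_of_mem hv hfin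

/-- If v, v' are both inessential in a finite V with circumradius < 1, then v' is
inessential in V \ {v}; consequently 𝓑(V) = 𝓑(ess V). -/
theorem inessential_removal (V : Set E3) (hfin : V.Finite)
    (hcr : ∃ (c : E3) (ρ : ℝ), ρ < 1 ∧ V ⊆ Metric.closedBall c ρ) :
    (∀ v v' : E3, v ∈ V → v' ∈ V → v ≠ v' →
      ¬ Essential V v → ¬ Essential V v' → ¬ Essential (V \ {v}) v') ∧
    ballSet V = ballSet {v | v ∈ V ∧ Essential V v} := by
  obtain ⟨c, ρ, hρ, hV⟩ := hcr
  exact ⟨fun _ _ hv hv' hne => not_essential_sdiff_of_not_essential hρ hV hv hv' hne,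
    ballSet_eq_ballSet_essential hfin hρ hV⟩
end
end

section
/- If V ⊆ ℝ³ is finite with diam V = 1 and a point v ∈ V is at distance 1 from at least two other points of V, then v is essential in V, i.e., there exists a unit ball containing V \ {v} and missing v. -/
open scoped InnerProductSpace
open Metric

noncomputable section

/-!
Write `a = p - v`, `b = q - v` and `d = v - u`. The constraints `‖p - u‖ ≤ 1` and `‖q - u‖ ≤ 1`
give `⟪d, a + b⟫ ≤ -‖d‖²`, so the point `w` at distance `R` from `v` in the direction of `a + b`
satisfies `‖w - u‖² ≤ R² - ‖d‖² (2R / ‖a + b‖ - 1)`. As `p ≠ q` forces `‖a + b‖ < 2`, this is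
below `1` at `R = 1` for every `u ≠ v`, uniformly since `V` is finite, so some `R > 1` still works.
-/

open scoped Topology

theorem dist_le_one_of_ediam_eq_one {X : Type*} [PseudoMetricSpace X] {s : Set X}
    (hs : ediam s = 1) {x y : X} (hx : x ∈ s) (hy : y ∈ s) : dist x y ≤ 1 := by
  have := edist_le_ediam_of_mem hx hy
  rwa [hs, ← ENNReal.ofReal_one, edist_le_ofReal zero_le_one] at this

section
variable {F : Type*} [NormedAddCommGroup F] [InnerProductSpace ℝ F]

theorem two_mul_inner_le_neg_sq_of_norm_add_le_one {d a : F} (ha : ‖a‖ = 1)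
    (hda : ‖d + a‖ ≤ 1) : 2 * ⟪d, a⟫_ℝ ≤ -‖d‖ ^ 2 := by
  have := norm_add_sq_real d a
  rw [ha] at this
  nlinarith [norm_nonneg (d + a)]

theorem exists_gt_inv_sq_add_lt_one {μ δ : ℝ} (hμ : 0 < μ) (hμ2 : μ < 2) (hδ : 0 < δ) :
    ∃ c > μ⁻¹, δ ^ 2 * (1 - 2 * c) + c ^ 2 * μ ^ 2 < 1 := by
  have h₀ : δ ^ 2 * (1 - 2 * μ⁻¹) + μ⁻¹ ^ 2 * μ ^ 2 < 1 := by
    have : 1 < 2 * μ⁻¹ := by rw [← div_eq_mul_inv, lt_div_iff₀ hμ]; linarith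
    rw [← mul_pow, inv_mul_cancel₀ hμ.ne']
    nlinarith [sq_pos_of_pos hδ]
  have hcont : Continuous fun c : ℝ => δ ^ 2 * (1 - 2 * c) + c ^ 2 * μ ^ 2 := by fun_prop
  have hnear : ∀ᶠ c in 𝓝[>] μ⁻¹, δ ^ 2 * (1 - 2 * c) + c ^ 2 * μ ^ 2 < 1 :=
    nhdsWithin_le_nhds ((hcont.tendsto μ⁻¹).eventually (gt_mem_nhds h₀))
  obtain ⟨c, hc, hc₀⟩ := (hnear.and self_mem_nhdsWithin).exists
  exact ⟨c, hc₀, hc⟩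

theorem norm_add_smul_le_one_of_inner_le {d m : F} (hdm : ⟪d, m⟫_ℝ ≤ -‖d‖ ^ 2)
    {δ c : ℝ} (hδ0 : 0 ≤ δ) (hδ : δ ≤ ‖d‖) (hc : 1 ≤ 2 * c)
    (h : δ ^ 2 * (1 - 2 * c) + c ^ 2 * ‖m‖ ^ 2 ≤ 1) : ‖d + c • m‖ ≤ 1 := by
  have hexp : ‖d + c • m‖ ^ 2 = ‖d‖ ^ 2 + 2 * c * ⟪d, m⟫_ℝ + c ^ 2 * ‖m‖ ^ 2 := by
    rw [norm_add_sq_real, real_inner_smul_right, norm_smul, Real.norm_eq_abs, mul_pow, sq_abs]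
    ring
  have hdδ : δ ^ 2 ≤ ‖d‖ ^ 2 := pow_le_pow_left₀ hδ0 hδ 2
  refine (sq_le_one_iff₀ (norm_nonneg _)).1 ?_
  calc ‖d + c • m‖ ^ 2 ≤ ‖d‖ ^ 2 * (1 - 2 * c) + c ^ 2 * ‖m‖ ^ 2 := by
        rw [hexp]; nlinarith
    _ ≤ δ ^ 2 * (1 - 2 * c) + c ^ 2 * ‖m‖ ^ 2 := by nlinarith
    _ ≤ 1 := h

theorem exists_center_of_two_unit_distances {v p q : F} (hp : ‖v - p‖ = 1) (hq : ‖v - q‖ = 1)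
    (hpq : p ≠ q) (hpq2 : ‖p - q‖ < 2) {δ : ℝ} (hδ : 0 < δ) :
    ∃ w, 1 < ‖w - v‖ ∧
      ∀ u, δ ≤ ‖v - u‖ → ‖p - u‖ ≤ 1 → ‖q - u‖ ≤ 1 → ‖w - u‖ ≤ 1 := by
  set a := p - v
  set b := q - v
  have ha : ‖a‖ = 1 := by rw [norm_sub_rev]; exact hp
  have hb : ‖b‖ = 1 := by rw [norm_sub_rev]; exact hq
  have hpar : ‖a + b‖ ^ 2 + ‖p - q‖ ^ 2 = 4 := by
    have := parallelogram_law_with_norm ℝ a b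
    rw [show a - b = p - q by simp [a, b], ha, hb] at this
    linarith
  have hpq0 : 0 < ‖p - q‖ := norm_pos_iff.2 (sub_ne_zero.2 hpq)
  have hμ : 0 < ‖a + b‖ := by nlinarith [norm_nonneg (a + b)]
  have hμ2 : ‖a + b‖ < 2 := by nlinarith
  obtain ⟨c, hc, hcδ⟩ := exists_gt_inv_sq_add_lt_one hμ hμ2 hδ
  have hc0 : 0 < c := (inv_pos.2 hμ).trans hc
  have hcμ : 1 < c * ‖a + b‖ := (inv_lt_iff_one_lt_mul₀ hμ).1 hc
  refine ⟨v + c • (a + b), ?_, fun u hu hpu hqu => ?_⟩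
  · rwa [add_sub_cancel_left, norm_smul, Real.norm_eq_abs, abs_of_pos hc0]
  · have hua := two_mul_inner_le_neg_sq_of_norm_add_le_one ha
      (show ‖(v - u) + a‖ ≤ 1 by rwa [sub_add_sub_cancel'])
    have hub := two_mul_inner_le_neg_sq_of_norm_add_le_one hb
      (show ‖(v - u) + b‖ ≤ 1 by rwa [sub_add_sub_cancel'])
    rw [show v + c • (a + b) - u = (v - u) + c • (a + b) by abel]
    refine norm_add_smul_le_one_of_inner_le ?_ hδ.le hu (by nlinarith) hcδ.le
    rw [inner_add_right]
    linarith
end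

theorem essential_of_two_diameters_general (V : Set E3) (hfin : V.Finite)
    (hdiam : EMetric.diam V = 1) (v p q : E3)
    (hp : p ∈ V) (hq : q ∈ V)
    (hpv : p ≠ v) (hpq : p ≠ q)
    (h1 : ‖v - p‖ = 1) (h2 : ‖v - q‖ = 1) :
    ∃ w : E3, 1 < ‖w - v‖ ∧ ∀ u ∈ V \ {v}, ‖w - u‖ ≤ 1 := by
  have hV : ∀ x ∈ V, ∀ y ∈ V, ‖x - y‖ ≤ 1 := fun x hx y hy =>
    dist_eq_norm x y ▸ dist_le_one_of_ediam_eq_one hdiam hx hy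
  obtain ⟨u₀, hu₀, hmin⟩ :=
    Set.exists_min_image (V \ {v}) (fun u => ‖v - u‖) hfin.sdiff ⟨p, hp, hpv⟩
  have hδ : 0 < ‖v - u₀‖ := norm_pos_iff.2 (sub_ne_zero.2 (Ne.symm hu₀.2))
  obtain ⟨w, hwv, hw⟩ := exists_center_of_two_unit_distances h1 h2 hpq
    ((hV p hp q hq).trans_lt one_lt_two) hδ
  exact ⟨w, hwv, fun u hu => hw u (hmin u hu) (hV p hp u hu.1) (hV q hq u hu.1)⟩

/-- If V is finite with diam V = 1 and v ∈ V is at distance 1 from at least two other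
points of V, then v is essential: some unit ball contains V \ {v} and misses v. -/
theorem essential_of_two_diameters (V : Set E3) (hfin : V.Finite)
    (hdiam : EMetric.diam V = 1) (v p q : E3)
    (hv : v ∈ V) (hp : p ∈ V) (hq : q ∈ V)
    (hpv : p ≠ v) (hqv : q ≠ v) (hpq : p ≠ q)
    (h1 : ‖v - p‖ = 1) (h2 : ‖v - q‖ = 1) :
    ∃ w : E3, 1 < ‖w - v‖ ∧ ∀ u ∈ V \ {v}, ‖w - u‖ ≤ 1 :=
  essential_of_two_diameters_general V hfin hdiam v p q hp hq hpv hpq h1 h2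
end
end
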